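/- Two cycles (k,l,n,m) and (k',l',n',m') representing circles are orthogonal (their defining circles intersect at right angles) if and only if km' + mk' − 2nn' − 2ll' = 0. Concretely, for circles of radii r, r' centered at (p,q), (p',q'), this condition is equivalent to (p−p')² + (q−q')² = r² + r'². -/

import Mathlib

theorem circle_cycle_pairing_eq (p q p' q' r r' : ℝ) :
    1 * (p' ^ 2 + q' ^ 2 - r' ^ 2) + (p ^ 2 + q ^ 2 - r ^ 2) * 1 - 2 * q * q' - 2 * p * p' =
      (p - p') ^ 2 + (q - q') ^ 2 - (r ^ 2 + r' ^ 2) := by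
  ring

theorem cycle_orthogonality_condition_general (p q p' q' r r' : ℝ) :
    let k := (1 : ℝ); let l := p; let n := q; let m := p ^ 2 + q ^ 2 - r ^ 2
    let k' := (1 : ℝ); let l' := p'; let n' := q'; let m' := p' ^ 2 + q' ^ 2 - r' ^ 2
    (k * m' + m * k' - 2 * n * n' - 2 * l * l' = 0 ↔
      (p - p') ^ 2 + (q - q') ^ 2 = r ^ 2 + r' ^ 2) := by
  intros
  rw [circle_cycle_pairing_eq, sub_eq_zero]

theorem cycle_orthogonality_condition (p q p' q' r r' : ℝ) (hr : 0 < r) (hr' : 0 < r') :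
    let k := (1 : ℝ); let l := p; let n := q; let m := p ^ 2 + q ^ 2 - r ^ 2
    let k' := (1 : ℝ); let l' := p'; let n' := q'; let m' := p' ^ 2 + q' ^ 2 - r' ^ 2
    (k * m' + m * k' - 2 * n * n' - 2 * l * l' = 0 ↔
      (p - p') ^ 2 + (q - q') ^ 2 = r ^ 2 + r' ^ 2) :=
  cycle_orthogonality_condition_general p q p' q' r r'
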